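/- Let Φ ∈ H^∞(𝕋, B(E)) and α ∈ 𝔻. If the Poisson integral P[Φ](α) is not injective, then, with M := ker P[Φ](α) (a nonzero closed subspace of E), the Blaschke-Potapov factor P := b_α P_M + (I_E − P_M) is a nontrivial right inner divisor of Φ. -/

import Mathlib

open MeasureTheory Complex

noncomputable section

/-- Normalized arc-length (Haar) measure on the unit circle `𝕋`, realized as a
measure on `ℂ` supported on the unit circle. -/
def mT : Measure ℂ :=
  Measure.map (fun t : ℝ => Complex.exp (t * Complex.I))
    ((ENNReal.ofReal (2 * Real.pi))⁻¹ • volume.restrict (Set.Ioc 0 (2 * Real.pi)))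

variable {D E E' : Type*}
  [NormedAddCommGroup D] [InnerProductSpace ℂ D] [CompleteSpace D]
  [NormedAddCommGroup E] [InnerProductSpace ℂ E] [CompleteSpace E]
  [NormedAddCommGroup E'] [InnerProductSpace ℂ E'] [CompleteSpace E']

/-- The `n`-th Fourier coefficient `Φ̂(n)x = ∫_𝕋 z̄ⁿ Φ(z)x dm(z)` of an
operator-valued function, applied to the vector `x`. -/
def fc (Φ : ℂ → D →L[ℂ] E) (n : ℤ) (x : D) : E :=
  ∫ z, ((starRingEnd ℂ) z) ^ n • (Φ z x) ∂mT

/-- Membership in `H^∞(𝕋, B(D,E))`: SOT-measurable, essentially bounded in operator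
norm, with vanishing negative Fourier coefficients. -/
structure MemHinf (Φ : ℂ → D →L[ℂ] E) : Prop where
  meas : ∀ x : D, AEStronglyMeasurable (fun z => Φ z x) mT
  bdd : ∃ r : ℝ, ∀ᵐ z ∂mT, ‖Φ z‖ ≤ r
  neg : ∀ n : ℤ, n < 0 → ∀ x : D, fc Φ n x = 0

/-- An inner function: `Φ ∈ H^∞` with `Φ(z)*Φ(z) = I` a.e. -/
def IsInnerFn (Φ : ℂ → D →L[ℂ] E) : Prop :=
  MemHinf Φ ∧ ∀ᵐ z ∂mT,
    (ContinuousLinearMap.adjoint (Φ z)).comp (Φ z) = ContinuousLinearMap.id ℂ D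

/-- A two-sided inner function: inner and `Φ(z)Φ(z)* = I` a.e. -/
def IsTwoSidedInner (Φ : ℂ → D →L[ℂ] E) : Prop :=
  IsInnerFn Φ ∧ ∀ᵐ z ∂mT,
    (Φ z).comp (ContinuousLinearMap.adjoint (Φ z)) = ContinuousLinearMap.id ℂ E

/-- `Θ` is a left inner divisor of `Φ`: `Θ` is inner and `Φ = Θ A` for some `A ∈ H^∞`. -/
def IsLeftInnerDiv (Θ : ℂ → E' →L[ℂ] E) (Φ : ℂ → D →L[ℂ] E) : Prop :=
  IsInnerFn Θ ∧ ∃ A : ℂ → D →L[ℂ] E', MemHinf A ∧ ∀ᵐ z ∂mT, Φ z = (Θ z).comp (A z)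

/-- `Ω` is a right inner divisor of `Φ`: `Ω` is inner and `Φ = B Ω` for some `B ∈ H^∞`. -/
def IsRightInnerDiv (Ω : ℂ → D →L[ℂ] E') (Φ : ℂ → D →L[ℂ] E) : Prop :=
  IsInnerFn Ω ∧ ∃ B : ℂ → E' →L[ℂ] E, MemHinf B ∧ ∀ᵐ z ∂mT, Φ z = (B z).comp (Ω z)

/-- `Δ` is an inner divisor of `Φ`: both a left and a right inner divisor. -/
def IsInnerDiv (Δ Φ : ℂ → E →L[ℂ] E) : Prop :=
  IsLeftInnerDiv Δ Φ ∧ IsRightInnerDiv Δ Φ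

/-- A unitary operator between Hilbert spaces. -/
def IsUnitaryOp (U : D →L[ℂ] E) : Prop :=
  (ContinuousLinearMap.adjoint U).comp U = ContinuousLinearMap.id ℂ D ∧
    U.comp (ContinuousLinearMap.adjoint U) = ContinuousLinearMap.id ℂ E

/-- An orthogonal projection: idempotent and self-adjoint. -/
def IsOrthoProj (P : E →L[ℂ] E) : Prop :=
  P.comp P = P ∧ ContinuousLinearMap.adjoint P = P

/-- A partial isometry: `T T* T = T`. -/
def IsPartialIsom (T : D →L[ℂ] E) : Prop :=
  (T.comp (ContinuousLinearMap.adjoint T)).comp T = T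

/-- The Blaschke factor `b_α(z) = (z - α)/(1 - ᾱ z)`. -/
def blaschke (α z : ℂ) : ℂ := (z - α) / (1 - (starRingEnd ℂ) α * z)

/-- The Poisson integral of `Φ ∈ H^∞` at `ζ ∈ 𝔻`, applied to the vector `x`:
`P[Φ](ζ)x = Σ_{n ≥ 0} Φ̂(n)x ζⁿ`. -/
def poissonFn (Φ : ℂ → D →L[ℂ] E) (ζ : ℂ) (x : D) : E :=
  ∑' n : ℕ, ζ ^ n • fc Φ (n : ℤ) x

/-- The `n`-th Fourier coefficient of a vector-valued function. -/
def vfc (f : ℂ → E) (n : ℤ) : E :=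
  ∫ z, ((starRingEnd ℂ) z) ^ n • f z ∂mT

/-- Membership in `H²(𝕋, E)`: square Bochner-integrable with vanishing
negative Fourier coefficients. -/
def MemH2 (f : ℂ → E) : Prop :=
  MemLp f 2 mT ∧ ∀ n : ℤ, n < 0 → vfc f n = 0

/-- A finite Blaschke product `θ = ∏ b_{αₙ}` with all `αₙ ∈ 𝔻`. -/
def IsFiniteBlaschkeProd (θ : ℂ → ℂ) : Prop :=
  ∃ (M : ℕ) (α : Fin M → ℂ), (∀ i, ‖α i‖ < 1) ∧ ∀ z, θ z = ∏ i, blaschke (α i) z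

/-- `Φ ∈ H^∞(𝕋, B(D,E))` is rational: `θ H²(𝕋,E) ⊆ ker H_{Φ*}` for some finite
Blaschke product `θ`, where `ker H_{Φ*} = {f ∈ H²(𝕋,E) : Φ*f ∈ H²(𝕋,D)}`. -/
def IsRationalFn (Φ : ℂ → D →L[ℂ] E) : Prop :=
  ∃ θ : ℂ → ℂ, IsFiniteBlaschkeProd θ ∧
    ∀ f : ℂ → E, MemH2 f →
      MemH2 (fun z => θ z • f z) ∧
      MemH2 (fun z => θ z • (ContinuousLinearMap.adjoint (Φ z)) (f z))

/-- A finite Blaschke-Potapov product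
`Δ = V ∏ₘ (b_{αₘ} Pₘ + (I - Pₘ))` with `V` a constant unitary, `αₘ ∈ 𝔻` and
`Pₘ` orthogonal projections. -/
def IsBPProduct (Δ : ℂ → E →L[ℂ] E) : Prop :=
  ∃ (M : ℕ) (V : E →L[ℂ] E) (α : Fin M → ℂ) (P : Fin M → E →L[ℂ] E),
    IsUnitaryOp V ∧ (∀ i, ‖α i‖ < 1) ∧ (∀ i, IsOrthoProj (P i)) ∧
    ∀ᵐ z ∂mT, Δ z = V * (List.ofFn fun i => blaschke (α i) z • P i + (1 - P i)).prod

/-- `Φ` and `Ψ` (with values in operators into the same space `E`) are left coprime: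
every common left inner divisor is a constant unitary. -/
def LeftCoprime {D₁ D₂ : Type*}
    [NormedAddCommGroup D₁] [InnerProductSpace ℂ D₁] [CompleteSpace D₁]
    [NormedAddCommGroup D₂] [InnerProductSpace ℂ D₂] [CompleteSpace D₂]
    (Φ : ℂ → D₁ →L[ℂ] E) (Ψ : ℂ → D₂ →L[ℂ] E) : Prop :=
  ∀ (F : Type) (_ : NormedAddCommGroup F) (_ : InnerProductSpace ℂ F) (_ : CompleteSpace F)
    (Θ : ℂ → F →L[ℂ] E), IsLeftInnerDiv Θ Φ → IsLeftInnerDiv Θ Ψ →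
      ∃ U : F →L[ℂ] E, IsUnitaryOp U ∧ ∀ᵐ z ∂mT, Θ z = U

/-! With `b = b_α` and `Ω = b P + (1 - P)`, `Ω(z)` is unitary for `|z| = 1`, so `Φ = (Φ Ω*) Ω` and
everything hinges on `Φ Ω* = b̄ Φ P + Φ (1 - P)` lying in `H^∞`. Expanding
`b̄(z) = (z̄ - ᾱ) Σₖ (α z̄)ᵏ` writes the negative Fourier coefficients of `b̄ Φ x` through the
shifted Poisson sums `Σₖ αᵏ Φ̂(k - m) x = αᵐ P[Φ](α) x`, which vanish for `x ∈ ran P = ker P[Φ](α)`.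
The same expansion of `b` puts `Ω` in `H^∞`, and `Ω` is not a.e. constant because `b` is injective
on `𝕋` while `ran P ≠ 0`. -/

open Metric Set Filter ComplexConjugate

lemma measurable_exp_ofReal_mul_I : Measurable fun t : ℝ => Complex.exp (t * Complex.I) :=
  (Complex.continuous_exp.comp (Complex.continuous_ofReal.mul continuous_const)).measurable

instance : IsProbabilityMeasure mT := by
  constructor
  rw [mT, Measure.map_apply measurable_exp_ofReal_mul_I MeasurableSet.univ]
  simp only [preimage_univ, Measure.smul_apply, Measure.restrict_apply MeasurableSet.univ,
    univ_inter, Real.volume_Ioc, smul_eq_mul, sub_zero]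
  exact ENNReal.inv_mul_cancel (by positivity) ENNReal.ofReal_ne_top

lemma ae_norm_eq_one_mT : ∀ᵐ z ∂mT, ‖z‖ = 1 := by
  rw [mT, ae_map_iff measurable_exp_ofReal_mul_I.aemeasurable
    (measurableSet_eq_fun measurable_norm measurable_const)]
  exact Eventually.of_forall fun t => Complex.norm_exp_ofReal_mul_I t

instance : NullSingletonClass mT := by
  refine ⟨fun w => ?_⟩
  have hcount : ((fun t : ℝ => Complex.exp (t * Complex.I)) ⁻¹' {w}).Countable := by
    rcases eq_empty_or_nonempty ((fun t : ℝ => Complex.exp (t * Complex.I)) ⁻¹' {w})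
      with h | ⟨t₀, ht₀⟩
    · exact h ▸ countable_empty
    refine (countable_range fun m : ℤ => t₀ + m * (2 * Real.pi)).mono fun t ht => ?_
    obtain ⟨m, hm⟩ := Circle.exp_eq_exp.mp (Subtype.ext (ht.trans ht₀.symm))
    exact ⟨m, hm.symm⟩
  rw [mT, Measure.map_apply measurable_exp_ofReal_mul_I (measurableSet_singleton w),
    Measure.smul_apply, hcount.measure_zero, smul_zero]

lemma integral_conj_zpow_mT {m : ℤ} (hm : m ≠ 0) : ∫ z, conj z ^ m ∂mT = 0 := by
  have hexp (t : ℝ) : conj (Complex.exp (t * Complex.I)) ^ m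
      = Complex.exp (-m * Complex.I * t) := by
    rw [← Complex.exp_conj, ← Complex.exp_int_mul, map_mul, Complex.conj_ofReal,
      Complex.conj_I]
    ring_nf
  rw [mT, integral_map measurable_exp_ofReal_mul_I.aemeasurable
      ((continuous_conj.measurable.pow_const m).aestronglyMeasurable), integral_smul_measure]
  simp_rw [hexp]
  rw [← intervalIntegral.integral_of_le (by positivity),
    integral_exp_mul_complex (by simp [hm, Complex.I_ne_zero])]
  have hperiod : Complex.exp (-(m * Complex.I * (2 * Real.pi))) = 1 := by
    rw [show -((m : ℂ) * Complex.I * (2 * Real.pi)) = (-m : ℤ) * (2 * Real.pi * Complex.I) by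
      push_cast; ring]
    exact Complex.exp_int_mul_two_pi_mul_I (-m)
  simp [hperiod]

lemma not_ae_eq_const_of_injOn {X : Type*} {g : ℂ → X} (hg : InjOn g (sphere 0 1)) (c : X) :
    ¬ ∀ᵐ z ∂mT, g z = c := by
  intro h
  have hsub : {z | z ∈ sphere (0 : ℂ) 1 ∧ g z = c}.Subsingleton :=
    fun z₁ h₁ z₂ h₂ => hg h₁.1 h₂.1 (h₁.2.trans h₂.2.symm)
  have hnot := measure_eq_zero_iff_ae_notMem.mp (hsub.measure_zero mT)
  obtain ⟨z, hz, hz'⟩ := ((ae_norm_eq_one_mT.and h).and hnot).exists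
  exact hz' ⟨mem_sphere_zero_iff_norm.mpr hz.1, hz.2⟩

section FourierCoefficients

variable {X : Type*} [NormedAddCommGroup X] [InnerProductSpace ℂ X]

lemma norm_conj_zpow_of_norm_eq_one {z : ℂ} (hz : ‖z‖ = 1) (n : ℤ) : ‖conj z ^ n‖ = 1 := by
  rw [norm_zpow, RCLike.norm_conj, hz, one_zpow]

lemma integrable_conj_zpow_smul {f : ℂ → X} (hf : Integrable f mT) (n : ℤ) :
    Integrable (fun z => conj z ^ n • f z) mT := by
  refine hf.norm.mono' ((continuous_conj.measurable.pow_const n).aestronglyMeasurable.smul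
    hf.aestronglyMeasurable) ?_
  filter_upwards [ae_norm_eq_one_mT] with z hz
  rw [norm_smul, norm_conj_zpow_of_norm_eq_one hz, one_mul]

lemma vfc_add {f g : ℂ → X} (hf : Integrable f mT) (hg : Integrable g mT) (n : ℤ) :
    vfc (fun z => f z + g z) n = vfc f n + vfc g n := by
  simp only [vfc, smul_add]
  exact integral_add (integrable_conj_zpow_smul hf n) (integrable_conj_zpow_smul hg n)

lemma vfc_sub {f g : ℂ → X} (hf : Integrable f mT) (hg : Integrable g mT) (n : ℤ) :
    vfc (fun z => f z - g z) n = vfc f n - vfc g n := by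
  simp only [vfc, smul_sub]
  exact integral_sub (integrable_conj_zpow_smul hf n) (integrable_conj_zpow_smul hg n)

lemma vfc_const [CompleteSpace X] (v : X) {n : ℤ} (hn : n ≠ 0) : vfc (fun _ => v) n = 0 := by
  rw [vfc, integral_smul_const, integral_conj_zpow_mT hn, zero_smul]

lemma vfc_congr_ae {f g : ℂ → X} (h : f =ᵐ[mT] g) (n : ℤ) : vfc f n = vfc g n :=
  integral_congr_ae (h.mono fun z hz => by simp only [hz])

lemma norm_vfc_le {f : ℂ → X} {C : ℝ} (hC : ∀ᵐ z ∂mT, ‖f z‖ ≤ C) (n : ℤ) : ‖vfc f n‖ ≤ C := by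
  refine (norm_integral_le_of_norm_le_const (C := C) ?_).trans_eq (by simp)
  filter_upwards [ae_norm_eq_one_mT, hC] with z hz hfz
  rwa [norm_smul, norm_conj_zpow_of_norm_eq_one hz, one_mul]

namespace MemHinf

variable {Y : Type*} [NormedAddCommGroup Y] [InnerProductSpace ℂ Y] {Φ : ℂ → Y →L[ℂ] X}

lemma exists_nonneg_bound (hΦ : MemHinf Φ) : ∃ r : ℝ, 0 ≤ r ∧ ∀ᵐ z ∂mT, ‖Φ z‖ ≤ r := by
  obtain ⟨r, hr⟩ := hΦ.bdd
  exact ⟨max r 0, le_max_right _ _, hr.mono fun z h => h.trans (le_max_left _ _)⟩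

lemma ae_norm_apply_le {r : ℝ} (hr : ∀ᵐ z ∂mT, ‖Φ z‖ ≤ r) (x : Y) :
    ∀ᵐ z ∂mT, ‖Φ z x‖ ≤ r * ‖x‖ :=
  hr.mono fun z hz => (Φ z).le_of_opNorm_le hz x

lemma integrable_apply (hΦ : MemHinf Φ) (x : Y) : Integrable (fun z => Φ z x) mT := by
  obtain ⟨r, hr⟩ := hΦ.bdd
  exact .of_bound (hΦ.meas x) _ (ae_norm_apply_le hr x)

lemma fc_sub (hΦ : MemHinf Φ) (n : ℤ) (x y : Y) : fc Φ n (x - y) = fc Φ n x - fc Φ n y := by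
  simp only [fc, map_sub]
  exact vfc_sub (hΦ.integrable_apply x) (hΦ.integrable_apply y) n

end MemHinf

end FourierCoefficients

lemma one_sub_conj_mul_ne_zero {α z : ℂ} (hα : ‖α‖ < 1) (hz : ‖z‖ ≤ 1) :
    1 - conj α * z ≠ 0 := by
  rw [sub_ne_zero]
  intro h
  have : ‖conj α * z‖ < 1 := by
    rw [norm_mul, RCLike.norm_conj]
    nlinarith [norm_nonneg α, norm_nonneg z]
  rw [← h, norm_one] at this
  exact this.false

lemma norm_blaschke {α z : ℂ} (hα : ‖α‖ < 1) (hz : ‖z‖ = 1) : ‖blaschke α z‖ = 1 := by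
  have hd := one_sub_conj_mul_ne_zero hα hz.le
  have hnum : 1 - conj α * z = (conj z - conj α) * z := by
    rw [sub_mul, Complex.conj_mul', hz]; push_cast; ring
  rw [blaschke, norm_div, hnum, norm_mul, hz, mul_one, ← map_sub, RCLike.norm_conj,
    div_self (norm_ne_zero_iff.mpr fun h => hd (by rw [hnum, ← map_sub, h, map_zero, zero_mul]))]

lemma conj_blaschke (α z : ℂ) : conj (blaschke α z) = blaschke (conj α) (conj z) := by
  simp [blaschke, map_div₀]

lemma conj_zpow_neg_one_of_norm_eq_one {z : ℂ} (hz : ‖z‖ = 1) : conj z ^ (-1 : ℤ) = z := by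
  rw [zpow_neg_one]
  exact inv_eq_of_mul_eq_one_right (by rw [Complex.conj_mul', hz]; norm_num)

lemma measurable_blaschke (α : ℂ) : Measurable (blaschke α) :=
  (measurable_id.sub_const α).div (measurable_const.sub (measurable_const_mul _))

lemma hasSum_blaschke {β w : ℂ} (h : ‖conj β * w‖ < 1) :
    HasSum (fun k : ℕ => conj β ^ k * (w ^ (k + 1) - β * w ^ k)) (blaschke β w) := by
  have hterm : (fun k : ℕ => conj β ^ k * (w ^ (k + 1) - β * w ^ k))
      = fun k => (w - β) * (conj β * w) ^ k := by
    ext k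
    rw [mul_pow]
    ring
  rw [hterm, blaschke, div_eq_mul_inv]
  exact (hasSum_geometric_of_norm_lt_one h).mul_left (w - β)

lemma blaschke_injOn_sphere {α : ℂ} (hα : ‖α‖ < 1) : InjOn (blaschke α) (sphere 0 1) := by
  intro z₁ hz₁ z₂ hz₂ h
  rw [mem_sphere_zero_iff_norm] at hz₁ hz₂
  rw [blaschke, blaschke, div_eq_div_iff (one_sub_conj_mul_ne_zero hα hz₁.le)
    (one_sub_conj_mul_ne_zero hα hz₂.le)] at h
  have hα' : 1 - conj α * α ≠ 0 := one_sub_conj_mul_ne_zero hα hα.le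
  have : (1 - conj α * α) * (z₁ - z₂) = 0 := by linear_combination h
  exact sub_eq_zero.mp ((mul_eq_zero.mp this).resolve_left hα')

section BlaschkeExpansion

variable {X : Type*} [NormedAddCommGroup X] [InnerProductSpace ℂ X]

lemma hasSum_conj_zpow_smul_blaschke_smul {β z : ℂ} (hβ : ‖β‖ < 1) (hz : ‖z‖ = 1) (p n : ℤ)
    (v : X) :
    HasSum
      (fun k : ℕ => conj β ^ k • (conj z ^ (n + p * (k + 1)) • v - β • conj z ^ (n + p * k) • v))
      (conj z ^ n • blaschke β (conj z ^ p) • v) := by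
  have hz₀ : conj z ≠ 0 := by rw [← norm_ne_zero_iff, RCLike.norm_conj, hz]; exact one_ne_zero
  have hw : ‖conj β * conj z ^ p‖ < 1 := by
    rwa [norm_mul, RCLike.norm_conj, norm_conj_zpow_of_norm_eq_one hz, mul_one]
  have hterm : (fun k : ℕ =>
        conj β ^ k • (conj z ^ (n + p * (k + 1)) • v - β • conj z ^ (n + p * k) • v)) =
      fun k : ℕ => (conj z ^ n *
        (conj β ^ k * ((conj z ^ p) ^ (k + 1) - β * (conj z ^ p) ^ k))) • v := by
    ext k
    simp only [← zpow_natCast, ← zpow_mul, zpow_add₀ hz₀, smul_smul, ← sub_smul]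
    push_cast
    ring_nf
  rw [hterm, smul_smul]
  exact ((hasSum_blaschke hw).mul_left _).smul_const v

/-- Expand `b_β(w) = (w - β) Σₖ (β̄ w)ᵏ` at `w = z̄ᵖ` and integrate termwise. -/
lemma hasSum_vfc_blaschke_smul {f : ℂ → X} (hf : AEStronglyMeasurable f mT) {C : ℝ}
    (hC : ∀ᵐ z ∂mT, ‖f z‖ ≤ C) {β : ℂ} (hβ : ‖β‖ < 1) (p n : ℤ) :
    HasSum (fun k : ℕ => conj β ^ k • (vfc f (n + p * (k + 1)) - β • vfc f (n + p * k)))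
      (vfc (fun z => blaschke β (conj z ^ p) • f z) n) := by
  have hfi : Integrable f mT := .of_bound hf C hC
  set F : ℕ → ℂ → X := fun k z =>
    conj β ^ k • (conj z ^ (n + p * (k + 1)) • f z - β • conj z ^ (n + p * k) • f z)
  have hint (m : ℤ) : Integrable (fun z => β • conj z ^ m • f z) mT :=
    (integrable_conj_zpow_smul hfi m).smul β
  have hFint (k : ℕ) : Integrable (F k) mT :=
    ((integrable_conj_zpow_smul hfi _).sub (hint _)).smul _
  have hFint_eq (k : ℕ) :
      ∫ z, F k z ∂mT = conj β ^ k • (vfc f (n + p * (k + 1)) - β • vfc f (n + p * k)) := by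
    rw [integral_smul, integral_sub (integrable_conj_zpow_smul hfi _) (hint _), integral_smul]
    rfl
  have hbound (k : ℕ) : ∀ᵐ z ∂mT, ‖F k z‖ ≤ ‖β‖ ^ k * ((1 + ‖β‖) * C) := by
    filter_upwards [ae_norm_eq_one_mT, hC] with z hz hfz
    have hC₀ : 0 ≤ C := (norm_nonneg _).trans hfz
    simp only [F, norm_smul, norm_pow, RCLike.norm_conj]
    gcongr
    refine (norm_sub_le _ _).trans ?_
    simp only [norm_smul, norm_conj_zpow_of_norm_eq_one hz, one_mul]
    nlinarith [norm_nonneg β]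
  have hsum := hasSum_integral_of_dominated_convergence (fun k _ => ‖β‖ ^ k * ((1 + ‖β‖) * C))
    (fun k => (hFint k).aestronglyMeasurable) hbound
    (.of_forall fun _ => (summable_geometric_of_lt_one (norm_nonneg β) hβ).mul_right _)
    (integrable_const _)
    (ae_norm_eq_one_mT.mono fun z hz => hasSum_conj_zpow_smul_blaschke_smul hβ hz p n (f z))
  simp only [hFint_eq] at hsum
  exact hsum

lemma vfc_blaschke_smul_const_eq_zero [CompleteSpace X] {α : ℂ} (hα : ‖α‖ < 1) (v : X) {n : ℤ}
    (hn : n < 0) : vfc (fun z => blaschke α z • v) n = 0 := by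
  have hexp := hasSum_vfc_blaschke_smul (f := fun _ => v) (C := ‖v‖) aestronglyMeasurable_const
    (.of_forall fun _ => le_rfl) hα (-1) n
  have hcircle : (fun z => blaschke α (conj z ^ (-1 : ℤ)) • v) =ᵐ[mT] fun z => blaschke α z • v :=
    ae_norm_eq_one_mT.mono fun z hz => by simp only [conj_zpow_neg_one_of_norm_eq_one hz]
  rw [vfc_congr_ae hcircle] at hexp
  have hzero (k : ℕ) :
      vfc (fun _ => v) (n + -1 * (k + 1)) = 0 ∧ vfc (fun _ => v) (n + -1 * k) = 0 :=
    ⟨vfc_const v (by omega), vfc_const v (by omega)⟩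
  simp only [hzero, smul_zero, sub_zero] at hexp
  exact hexp.unique hasSum_zero

end BlaschkeExpansion

section Poisson

variable {X Y : Type*} [NormedAddCommGroup X] [InnerProductSpace ℂ X]
  [CompleteSpace X] [NormedAddCommGroup Y] [InnerProductSpace ℂ Y] {Φ : ℂ → Y →L[ℂ] X} {α : ℂ}

namespace MemHinf

lemma hasSum_poissonFn (hΦ : MemHinf Φ) (hα : ‖α‖ < 1) (x : Y) :
    HasSum (fun k : ℕ => α ^ k • fc Φ k x) (poissonFn Φ α x) := by
  obtain ⟨r, -, hr⟩ := hΦ.exists_nonneg_bound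
  refine Summable.hasSum (.of_norm_bounded
    ((summable_geometric_of_lt_one (norm_nonneg α) hα).mul_right (r * ‖x‖)) fun k => ?_)
  rw [norm_smul, norm_pow]
  exact mul_le_mul_of_nonneg_left (norm_vfc_le (ae_norm_apply_le hr x) k) (by positivity)

lemma poissonFn_sub (hΦ : MemHinf Φ) (hα : ‖α‖ < 1) (x y : Y) :
    poissonFn Φ α (x - y) = poissonFn Φ α x - poissonFn Φ α y := by
  refine (hΦ.hasSum_poissonFn hα (x - y)).unique ?_
  simp_rw [hΦ.fc_sub, smul_sub]
  exact (hΦ.hasSum_poissonFn hα x).sub (hΦ.hasSum_poissonFn hα y)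

/-- The first `m` terms vanish because `Φ` has no negative Fourier coefficients. -/
lemma hasSum_poissonFn_shift (hΦ : MemHinf Φ) (hα : ‖α‖ < 1) (x : Y) (m : ℕ) :
    HasSum (fun k : ℕ => α ^ k • fc Φ (k - m) x) (α ^ m • poissonFn Φ α x) := by
  have hinit : ∑ i ∈ Finset.range m, α ^ i • fc Φ (i - m) x = 0 :=
    Finset.sum_eq_zero fun i hi => by
      rw [hΦ.neg _ (by simp only [Finset.mem_range] at hi; omega), smul_zero]
  rw [← hasSum_nat_add_iff' m, hinit, sub_zero]
  simpa only [Nat.cast_add, add_sub_cancel_right, pow_add, mul_comm _ (α ^ m), mul_smul]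
    using (hΦ.hasSum_poissonFn hα x).const_smul (α ^ m)

lemma vfc_conj_blaschke_smul_eq_zero (hΦ : MemHinf Φ) (hα : ‖α‖ < 1) {y : Y}
    (hy : poissonFn Φ α y = 0) {n : ℤ} (hn : n < 0) :
    vfc (fun z => conj (blaschke α z) • Φ z y) n = 0 := by
  obtain ⟨r, -, hr⟩ := hΦ.exists_nonneg_bound
  obtain ⟨m, rfl⟩ : ∃ m : ℕ, n = -(m + 1) := ⟨(-n - 1).toNat, by omega⟩
  have hexp := hasSum_vfc_blaschke_smul (hΦ.meas y) (ae_norm_apply_le hr y)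
    (by rwa [RCLike.norm_conj]) 1 (-(m + 1))
  simp only [Complex.conj_conj, zpow_one, ← conj_blaschke] at hexp
  refine hexp.unique ?_
  have hshift := (hΦ.hasSum_poissonFn_shift hα y m).sub
    ((hΦ.hasSum_poissonFn_shift hα y (m + 1)).const_smul (conj α))
  simp only [hy, smul_zero, sub_zero] at hshift
  convert hshift using 2 with k
  have h₁ : -((m : ℤ) + 1) + 1 * (k + 1) = k - m := by ring
  have h₂ : -((m : ℤ) + 1) + 1 * k = k - (m + 1 : ℕ) := by push_cast; ring
  rw [h₁, h₂, smul_sub, smul_comm _ (conj α)]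
  rfl

end MemHinf

end Poisson

section BlaschkePotapov

variable {P : E →L[ℂ] E}

namespace IsOrthoProj

lemma apply_apply (hP : IsOrthoProj P) (x : E) : P (P x) = P x :=
  ContinuousLinearMap.ext_iff.mp hP.1 x

lemma adjoint_smul_add_one_sub (hP : IsOrthoProj P) (b : ℂ) :
    ContinuousLinearMap.adjoint (b • P + (1 - P)) = conj b • P + (1 - P) := by
  rw [map_add, map_sub, map_smulₛₗ, hP.2, ContinuousLinearMap.one_def,
    ContinuousLinearMap.adjoint_id]

lemma adjoint_comp_smul_add_one_sub (hP : IsOrthoProj P) {b : ℂ} (hb : ‖b‖ = 1) :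
    (ContinuousLinearMap.adjoint (b • P + (1 - P))).comp (b • P + (1 - P)) =
      ContinuousLinearMap.id ℂ E := by
  have hb' : b * conj b = 1 := by rw [Complex.mul_conj', hb]; norm_num
  ext x
  simp [hP.adjoint_smul_add_one_sub, hP.apply_apply, smul_smul, hb']

lemma norm_smul_add_one_sub_le (hP : IsOrthoProj P) {b : ℂ} (hb : ‖b‖ = 1) :
    ‖b • P + (1 - P)‖ ≤ 1 := by
  have hiso := (b • P + (1 - P)).norm_map_iff_adjoint_comp_self.mpr
    (hP.adjoint_comp_smul_add_one_sub hb)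
  exact ContinuousLinearMap.opNorm_le_bound _ zero_le_one fun x => by rw [hiso, one_mul]

end IsOrthoProj

variable {α : ℂ}

lemma memHinf_blaschkePotapov (hα : ‖α‖ < 1) (hP : IsOrthoProj P) :
    MemHinf fun z => blaschke α z • P + (1 - P) := by
  have hmeas (x : E) : AEStronglyMeasurable (fun z => blaschke α z • P x) mT :=
    (measurable_blaschke α).aestronglyMeasurable.smul aestronglyMeasurable_const
  have hint (x : E) : Integrable (fun z => blaschke α z • P x) mT :=
    .of_bound (hmeas x) ‖P x‖ (ae_norm_eq_one_mT.mono fun z hz => by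
      rw [norm_smul, norm_blaschke hα hz, one_mul])
  refine ⟨fun x => (hmeas x).add aestronglyMeasurable_const,
    ⟨1, ae_norm_eq_one_mT.mono fun z hz => hP.norm_smul_add_one_sub_le (norm_blaschke hα hz)⟩,
    fun n hn x => ?_⟩
  change vfc (fun z => blaschke α z • P x + (1 - P) x) n = 0
  rw [vfc_add (hint x) (integrable_const _), vfc_blaschke_smul_const_eq_zero hα _ hn,
    vfc_const _ hn.ne, add_zero]

variable {Y : Type*} [NormedAddCommGroup Y] [InnerProductSpace ℂ Y] [CompleteSpace Y]
  {Φ : ℂ → E →L[ℂ] Y}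

lemma MemHinf.comp_adjoint_blaschkePotapov (hΦ : MemHinf Φ) (hα : ‖α‖ < 1) (hP : IsOrthoProj P)
    (hker : ∀ x, poissonFn Φ α (P x) = 0) :
    MemHinf fun z => (Φ z).comp (ContinuousLinearMap.adjoint (blaschke α z • P + (1 - P))) := by
  obtain ⟨r, hr0, hr⟩ := hΦ.exists_nonneg_bound
  have hmeas (x : E) : AEStronglyMeasurable (fun z => conj (blaschke α z) • Φ z (P x)) mT :=
    (continuous_conj.measurable.comp (measurable_blaschke α)).aestronglyMeasurable.smul
      (hΦ.meas (P x))
  have hint (x : E) : Integrable (fun z => conj (blaschke α z) • Φ z (P x)) mT :=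
    .of_bound (hmeas x) (r * ‖P x‖) (by
      filter_upwards [ae_norm_eq_one_mT, MemHinf.ae_norm_apply_le hr (P x)] with z hz hΦz
      rwa [norm_smul, RCLike.norm_conj, norm_blaschke hα hz, one_mul])
  have happly (z : ℂ) (x : E) :
      (Φ z).comp (ContinuousLinearMap.adjoint (blaschke α z • P + (1 - P))) x =
        conj (blaschke α z) • Φ z (P x) + Φ z ((1 - P) x) := by
    simp [hP.adjoint_smul_add_one_sub]
  refine ⟨fun x => ?_, ⟨r, ?_⟩, fun n hn x => ?_⟩
  · simp only [happly]
    exact (hmeas x).add (hΦ.meas _)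
  · filter_upwards [ae_norm_eq_one_mT, hr] with z hz hΦz
    refine (ContinuousLinearMap.opNorm_comp_le _ _).trans ?_
    rw [hP.adjoint_smul_add_one_sub]
    simpa using mul_le_mul hΦz (hP.norm_smul_add_one_sub_le (by rw [RCLike.norm_conj,
      norm_blaschke hα hz])) (norm_nonneg _) hr0
  · change vfc (fun z => _) n = 0
    simp only [happly]
    rw [vfc_add (hint x) (hΦ.integrable_apply _), hΦ.vfc_conj_blaschke_smul_eq_zero hα (hker x) hn,
      zero_add]
    exact hΦ.neg n hn _

lemma isRightInnerDiv_blaschkePotapov (hΦ : MemHinf Φ) (hα : ‖α‖ < 1) (hP : IsOrthoProj P)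
    (hker : ∀ x, poissonFn Φ α (P x) = 0) :
    IsRightInnerDiv (fun z => blaschke α z • P + (1 - P)) Φ := by
  refine ⟨⟨memHinf_blaschkePotapov hα hP, ?_⟩, _, hΦ.comp_adjoint_blaschkePotapov hα hP hker, ?_⟩
  · exact ae_norm_eq_one_mT.mono fun z hz =>
      hP.adjoint_comp_smul_add_one_sub (norm_blaschke hα hz)
  · refine ae_norm_eq_one_mT.mono fun z hz => ?_
    rw [ContinuousLinearMap.comp_assoc, hP.adjoint_comp_smul_add_one_sub (norm_blaschke hα hz),
      ContinuousLinearMap.comp_id]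

lemma blaschkePotapov_not_ae_eq_const (hα : ‖α‖ < 1) (hP : IsOrthoProj P)
    (hP₀ : LinearMap.range (P : E →ₗ[ℂ] E) ≠ ⊥) (U : E →L[ℂ] E) :
    ¬ ∀ᵐ z ∂mT, blaschke α z • P + (1 - P) = U := by
  obtain ⟨_, ⟨x, rfl⟩, hx₀⟩ := (Submodule.ne_bot_iff _).mp hP₀
  have hinj : InjOn (fun z => blaschke α z • P x) (sphere 0 1) :=
    fun z₁ h₁ z₂ h₂ h => blaschke_injOn_sphere hα h₁ h₂ (smul_left_injective ℂ hx₀ h)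
  refine fun h => not_ae_eq_const_of_injOn hinj (U (P x)) (h.mono fun z hz => ?_)
  simp [← hz, hP.apply_apply]

end BlaschkePotapov

/-- Let `Φ ∈ H^∞(𝕋, B(E))` and `α ∈ 𝔻`. If the Poisson integral
`P[Φ](α)` is not injective, then, with `M := ker P[Φ](α)` (a nonzero closed subspace)
and `P_M` the orthogonal projection onto `M`, the Blaschke-Potapov factor
`b_α P_M + (I - P_M)` is a nontrivial right inner divisor of `Φ`. -/
theorem BPFactor_is_nontrivial_rightInnerDivisor (Φ : ℂ → E →L[ℂ] E) (hΦ : MemHinf Φ)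
    (α : ℂ) (hα : ‖α‖ < 1) (hni : ¬ Function.Injective (poissonFn Φ α))
    (P : E →L[ℂ] E) (hP : IsOrthoProj P)
    (hPrange : (LinearMap.range (P : E →ₗ[ℂ] E) : Set E) = {x : E | poissonFn Φ α x = 0}) :
    (LinearMap.range (P : E →ₗ[ℂ] E) ≠ ⊥) ∧
    IsRightInnerDiv (fun z => blaschke α z • P + (1 - P)) Φ ∧
    ¬ ∃ U : E →L[ℂ] E, IsUnitaryOp U ∧ ∀ᵐ z ∂mT, blaschke α z • P + (1 - P) = U := by
  have hker (x : E) : poissonFn Φ α (P x) = 0 := (Set.ext_iff.mp hPrange (P x)).mp ⟨x, rfl⟩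
  have hrange : LinearMap.range (P : E →ₗ[ℂ] E) ≠ ⊥ := by
    obtain ⟨a, b, hab, hne⟩ := Function.not_injective_iff.mp hni
    have hab' : a - b ∈ (LinearMap.range (P : E →ₗ[ℂ] E) : Set E) := by
      rw [hPrange]
      exact (hΦ.poissonFn_sub hα a b).trans (sub_eq_zero.mpr hab)
    exact (Submodule.ne_bot_iff _).mpr ⟨a - b, hab', sub_ne_zero.mpr hne⟩
  exact ⟨hrange, isRightInnerDiv_blaschkePotapov hΦ hα hP hker,
    fun ⟨U, _, hU⟩ => blaschkePotapov_not_ae_eq_const hα hP hrange U hU⟩
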